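/- The map φ(t,x,y,z) = (t, x³ + 3(1−t²)x + y² − z², y, z) restricts to a diffeomorphism from (−1,1) × ℝ³ onto (−1,1) × ℝ³ and provides a trivialization of the restriction of CM₀(t,x,y,z) = (t, x³ + 3(1−t²)x + y² − z²) over (−1,1) × ℝ, i.e. CM₀ = pr ∘ φ on (−1,1) × ℝ³ where pr is projection onto the first two coordinates. Consequently the vector fields H₀ = (3(1−t²+x²))^{-1} ∂_x, V₀⁺ = ∂_y − 2y(3(1−t²+x²))^{-1} ∂_x, V₀⁻ = ∂_z + 2z(3(1−t²+x²))^{-1} ∂_x pairwise commute on (−1,1) × ℝ³, H₀ is horizontal for CM₀ with d(CM₀)(H₀) = (0, 1), and V₀⁺, V₀⁻ are vertical (d(CM₀)(V₀^±) = 0). -/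

import Mathlib

noncomputable section

/-- The initial cusp merge configuration
`CM₀(t,x,y,z) = (t, x³ + 3(1−t²)x + y² − z²)`. -/
def CM0 : (Fin 4 → ℝ) → (Fin 2 → ℝ) := fun p =>
  ![p 0, (p 1) ^ 3 + 3 * (1 - (p 0) ^ 2) * p 1 + (p 2) ^ 2 - (p 3) ^ 2]

/-- The trivialization `φ(t,x,y,z) = (t, x³ + 3(1−t²)x + y² − z², y, z)`. -/
def φtriv : (Fin 4 → ℝ) → (Fin 4 → ℝ) := fun p =>
  ![p 0, (p 1) ^ 3 + 3 * (1 - (p 0) ^ 2) * p 1 + (p 2) ^ 2 - (p 3) ^ 2, p 2, p 3]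

/-- The inner region `(−1,1) × ℝ³`. -/
def innerRegion : Set (Fin 4 → ℝ) := {p | -1 < p 0 ∧ p 0 < 1}

/-- `H₀ = (3(1−t²+x²))⁻¹ ∂_x`. -/
def H0 : (Fin 4 → ℝ) → (Fin 4 → ℝ) := fun p =>
  ![0, (3 * (1 - (p 0) ^ 2 + (p 1) ^ 2))⁻¹, 0, 0]

/-- `V₀⁺ = ∂_y − 2y(3(1−t²+x²))⁻¹ ∂_x`. -/
def V0p : (Fin 4 → ℝ) → (Fin 4 → ℝ) := fun p =>
  ![0, -(2 * p 2) * (3 * (1 - (p 0) ^ 2 + (p 1) ^ 2))⁻¹, 1, 0]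

/-- `V₀⁻ = ∂_z + 2z(3(1−t²+x²))⁻¹ ∂_x`. -/
def V0m : (Fin 4 → ℝ) → (Fin 4 → ℝ) := fun p =>
  ![0, 2 * p 3 * (3 * (1 - (p 0) ^ 2 + (p 1) ^ 2))⁻¹, 0, 1]

/-! ### Auxiliary material -/

namespace CuspMergeAux

lemma hasFDerivAt_proj (i : Fin 4) (p : Fin 4 → ℝ) :
    HasFDerivAt (fun q : Fin 4 → ℝ => q i)
      (ContinuousLinearMap.proj (R := ℝ) (φ := fun _ : Fin 4 => ℝ) i) p :=
  (ContinuousLinearMap.proj (R := ℝ) (φ := fun _ : Fin 4 => ℝ) i).hasFDerivAt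

lemma sq_rw : (fun q : Fin 4 → ℝ => (3 * (1 - q 0 ^ 2 + q 1 ^ 2))⁻¹)
    = fun q : Fin 4 → ℝ => (3 * (1 - q 0 * q 0 + q 1 * q 1))⁻¹ := by
  funext q; ring_nf

/-- derivative of g = (3(1-t²+x²))⁻¹ -/
lemma hasFDerivAt_g (p : Fin 4 → ℝ) (hne : (3:ℝ) * (1 - p 0 ^ 2 + p 1 ^ 2) ≠ 0) :
    ∃ L : (Fin 4 → ℝ) →L[ℝ] ℝ,
      HasFDerivAt (fun q : Fin 4 → ℝ => (3 * (1 - q 0 ^ 2 + q 1 ^ 2))⁻¹) L p ∧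
      ∀ v, L v = -((3 * (1 - p 0 ^ 2 + p 1 ^ 2))⁻¹) ^ 2
          * (3 * (-(2 * p 0 * v 0) + 2 * p 1 * v 1)) := by
  have h0 := hasFDerivAt_proj 0 p
  have h1 := hasFDerivAt_proj 1 p
  have hD := (((h0.mul h0).const_sub 1).add (h1.mul h1)).const_mul (3:ℝ)
  have hne' : (3:ℝ) * (1 - p 0 * p 0 + p 1 * p 1) ≠ 0 := by ring_nf; ring_nf at hne; exact hne
  have hg := (hasFDerivAt_inv hne').comp p hD
  rw [sq_rw]
  refine ⟨_, hg, fun v => ?_⟩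
  have h2 : (1:ℝ) - p 0 ^ 2 + p 1 ^ 2 ≠ 0 := by intro h; apply hne; rw [h]; ring
  simp [ContinuousLinearMap.proj_apply]
  field_simp
  ring

/-- derivative of the x-component of V0p -/
lemma hasFDerivAt_V0p1 (p : Fin 4 → ℝ) (hne : (3:ℝ) * (1 - p 0 ^ 2 + p 1 ^ 2) ≠ 0) :
    ∃ L : (Fin 4 → ℝ) →L[ℝ] ℝ,
      HasFDerivAt (fun q : Fin 4 → ℝ => -(2 * q 2) * (3 * (1 - q 0 ^ 2 + q 1 ^ 2))⁻¹) L p ∧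
      ∀ v, L v = -(2 * v 2) * (3 * (1 - p 0 ^ 2 + p 1 ^ 2))⁻¹
          + -(2 * p 2) * (-((3 * (1 - p 0 ^ 2 + p 1 ^ 2))⁻¹) ^ 2
              * (3 * (-(2 * p 0 * v 0) + 2 * p 1 * v 1))) := by
  obtain ⟨L, hg, hLv⟩ := hasFDerivAt_g p hne
  have h2 := hasFDerivAt_proj 2 p
  have hf := ((h2.const_mul (2:ℝ)).neg).mul hg
  refine ⟨_, hf, fun v => ?_⟩
  simp [ContinuousLinearMap.proj_apply, hLv]
  ring

/-- derivative of the x-component of V0m -/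
lemma hasFDerivAt_V0m1 (p : Fin 4 → ℝ) (hne : (3:ℝ) * (1 - p 0 ^ 2 + p 1 ^ 2) ≠ 0) :
    ∃ L : (Fin 4 → ℝ) →L[ℝ] ℝ,
      HasFDerivAt (fun q : Fin 4 → ℝ => 2 * q 3 * (3 * (1 - q 0 ^ 2 + q 1 ^ 2))⁻¹) L p ∧
      ∀ v, L v = 2 * v 3 * (3 * (1 - p 0 ^ 2 + p 1 ^ 2))⁻¹
          + 2 * p 3 * (-((3 * (1 - p 0 ^ 2 + p 1 ^ 2))⁻¹) ^ 2
              * (3 * (-(2 * p 0 * v 0) + 2 * p 1 * v 1))) := by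
  obtain ⟨L, hg, hLv⟩ := hasFDerivAt_g p hne
  have h3 := hasFDerivAt_proj 3 p
  have hf := (h3.const_mul (2:ℝ)).mul hg
  refine ⟨_, hf, fun v => ?_⟩
  simp [ContinuousLinearMap.proj_apply, hLv]
  ring

lemma cm1_rw : (fun q : Fin 4 → ℝ => q 1 ^ 3 + 3 * (1 - q 0 ^ 2) * q 1 + q 2 ^ 2 - q 3 ^ 2)
    = fun q : Fin 4 → ℝ => q 1 * q 1 * q 1 + 3 * (1 - q 0 * q 0) * q 1 + q 2 * q 2 - q 3 * q 3 := by
  funext q; ring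

/-- derivative of the second component of CM0 -/
lemma hasFDerivAt_CM1 (p : Fin 4 → ℝ) :
    ∃ L : (Fin 4 → ℝ) →L[ℝ] ℝ,
      HasFDerivAt (fun q : Fin 4 → ℝ =>
        q 1 ^ 3 + 3 * (1 - q 0 ^ 2) * q 1 + q 2 ^ 2 - q 3 ^ 2) L p ∧
      ∀ v, L v = (3 * p 1 ^ 2 + 3 * (1 - p 0 ^ 2)) * v 1 - 6 * p 0 * p 1 * v 0
          + 2 * p 2 * v 2 - 2 * p 3 * v 3 := by
  have h0 := hasFDerivAt_proj 0 p
  have h1 := hasFDerivAt_proj 1 p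
  have h2 := hasFDerivAt_proj 2 p
  have h3 := hasFDerivAt_proj 3 p
  have hf := ((((h1.mul h1).mul h1).add ((((h0.mul h0).const_sub 1).const_mul (3:ℝ)).mul h1)).add
      (h2.mul h2)).sub (h3.mul h3)
  rw [cm1_rw]
  refine ⟨_, hf, fun v => ?_⟩
  simp [ContinuousLinearMap.proj_apply]
  ring

/-! ### The inverse of the trivialization -/

def acoef (q : Fin 4 → ℝ) : ℝ := 1 - q 0 ^ 2
def bval (q : Fin 4 → ℝ) : ℝ := q 1 - q 2 ^ 2 + q 3 ^ 2
def Dval (q : Fin 4 → ℝ) : ℝ := Real.sqrt (bval q ^ 2 + 4 * acoef q ^ 3)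
def uval (q : Fin 4 → ℝ) : ℝ := ((bval q + Dval q) / 2) ^ ((1:ℝ)/3)
def cval (q : Fin 4 → ℝ) : ℝ := uval q - acoef q / uval q
def ψdef (q : Fin 4 → ℝ) : Fin 4 → ℝ := ![q 0, cval q, q 2, q 3]

lemma arg_pos (q : Fin 4 → ℝ) (ha : 0 < acoef q) : 0 < bval q ^ 2 + 4 * acoef q ^ 3 := by
  have := pow_pos ha 3
  nlinarith [sq_nonneg (bval q)]

lemma Dsq (q : Fin 4 → ℝ) (ha : 0 < acoef q) :
    Dval q ^ 2 = bval q ^ 2 + 4 * acoef q ^ 3 :=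
  Real.sq_sqrt (arg_pos q ha).le

lemma base_pos (q : Fin 4 → ℝ) (ha : 0 < acoef q) : 0 < (bval q + Dval q) / 2 := by
  have h1 : 0 ≤ Dval q := Real.sqrt_nonneg _
  have h2 := Dsq q ha
  have h3 := pow_pos ha 3
  nlinarith

lemma uval_pos (q : Fin 4 → ℝ) (ha : 0 < acoef q) : 0 < uval q :=
  Real.rpow_pos_of_pos (base_pos q ha) _

lemma uval_cube (q : Fin 4 → ℝ) (ha : 0 < acoef q) :
    uval q ^ 3 = (bval q + Dval q) / 2 := by
  rw [uval, ← Real.rpow_natCast (((bval q + Dval q) / 2) ^ ((1:ℝ)/3)) 3,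
    ← Real.rpow_mul (base_pos q ha).le]
  norm_num

lemma cubic_root (q : Fin 4 → ℝ) (ha : 0 < acoef q) :
    cval q ^ 3 + 3 * acoef q * cval q = bval q := by
  have hu := uval_pos q ha
  have h6 : uval q ^ 3 * uval q ^ 3 - acoef q ^ 3 = bval q * uval q ^ 3 := by
    rw [uval_cube q ha]
    linear_combination Dsq q ha / 4
  have hcu : cval q * uval q = uval q ^ 2 - acoef q := by
    rw [cval]; field_simp
  have hz : (cval q ^ 3 + 3 * acoef q * cval q - bval q) * uval q ^ 3 = 0 := by
    have : (cval q ^ 3 + 3 * acoef q * cval q - bval q) * uval q ^ 3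
        = (cval q * uval q) ^ 3 + 3 * acoef q * (cval q * uval q) * uval q ^ 2
          - bval q * uval q ^ 3 := by ring
    rw [this, hcu]
    linear_combination h6
  have hu3 : uval q ^ 3 ≠ 0 := pow_ne_zero 3 hu.ne'
  rcases mul_eq_zero.mp hz with h | h
  · linarith
  · exact absurd h hu3

lemma cubic_strictMono (a : ℝ) (ha : 0 < a) : StrictMono (fun x : ℝ => x ^ 3 + 3 * a * x) := by
  have h1 : StrictMono (fun x : ℝ => x ^ 3) := Odd.strictMono_pow ⟨1, by norm_num⟩
  have h2 : StrictMono (fun x : ℝ => 3 * a * x) := fun x y hxy => by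
    dsimp only; nlinarith
  exact h1.add h2

lemma contDiffAt_cval (q : Fin 4 → ℝ) (ha : 0 < acoef q) : ContDiffAt ℝ (⊤ : ℕ∞) cval q := by
  have hb : ContDiff ℝ (⊤ : ℕ∞) bval := by unfold bval; fun_prop
  have hac : ContDiff ℝ (⊤ : ℕ∞) acoef := by unfold acoef; fun_prop
  have harg : ContDiff ℝ (⊤ : ℕ∞) (fun q => bval q ^ 2 + 4 * acoef q ^ 3) := by
    unfold bval acoef; fun_prop
  have hD : ContDiffAt ℝ (⊤ : ℕ∞) Dval q :=
    (Real.contDiffAt_sqrt (arg_pos q ha).ne').comp q harg.contDiffAt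
  have hbase : ContDiffAt ℝ (⊤ : ℕ∞) (fun q => (bval q + Dval q) / 2) q :=
    (hb.contDiffAt.add hD).div_const 2
  have hu : ContDiffAt ℝ (⊤ : ℕ∞) uval q :=
    ContDiffAt.comp (g := fun x : ℝ => x ^ ((1:ℝ)/3)) q
      (Real.contDiffAt_rpow_const_of_ne (base_pos q ha).ne') hbase
  exact hu.sub (hac.contDiffAt.div hu (uval_pos q ha).ne')

end CuspMergeAux

open CuspMergeAux in
theorem trivialization_and_framing :
    Set.BijOn φtriv innerRegion innerRegion ∧
    ContDiffOn ℝ (⊤ : ℕ∞) φtriv innerRegion ∧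
    (∃ ψ : (Fin 4 → ℝ) → (Fin 4 → ℝ), ContDiffOn ℝ (⊤ : ℕ∞) ψ innerRegion ∧
        Set.LeftInvOn ψ φtriv innerRegion ∧ Set.RightInvOn ψ φtriv innerRegion) ∧
    (∀ p ∈ innerRegion, CM0 p = ![φtriv p 0, φtriv p 1]) ∧
    (∀ p ∈ innerRegion, fderiv ℝ V0p p (H0 p) - fderiv ℝ H0 p (V0p p) = 0) ∧
    (∀ p ∈ innerRegion, fderiv ℝ V0m p (H0 p) - fderiv ℝ H0 p (V0m p) = 0) ∧
    (∀ p ∈ innerRegion, fderiv ℝ V0m p (V0p p) - fderiv ℝ V0p p (V0m p) = 0) ∧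
    (∀ p ∈ innerRegion, fderiv ℝ CM0 p (H0 p) = ![0, 1]) ∧
    (∀ p ∈ innerRegion, fderiv ℝ CM0 p (V0p p) = 0) ∧
    (∀ p ∈ innerRegion, fderiv ℝ CM0 p (V0m p) = 0) := by
  have hane : ∀ p : Fin 4 → ℝ, p ∈ innerRegion → (3:ℝ) * (1 - p 0 ^ 2 + p 1 ^ 2) ≠ 0 := by
    intro p hp
    obtain ⟨h1, h2⟩ := hp
    have : p 0 ^ 2 < 1 := by nlinarith
    nlinarith [sq_nonneg (p 1)]
  -- the derivative of H0's x-component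
  have fderivH1 : ∀ p : Fin 4 → ℝ, p ∈ innerRegion → ∃ L : (Fin 4 → ℝ) →L[ℝ] ℝ,
      fderiv ℝ (fun q => H0 q 1) p = L ∧
      DifferentiableAt ℝ (fun q => H0 q 1) p ∧
      ∀ v, L v = -((3 * (1 - p 0 ^ 2 + p 1 ^ 2))⁻¹) ^ 2
          * (3 * (-(2 * p 0 * v 0) + 2 * p 1 * v 1)) := by
    intro p hp
    obtain ⟨L, hg, hgv⟩ := hasFDerivAt_g p (hane p hp)
    have he : (fun q : Fin 4 → ℝ => H0 q 1)
        = fun q : Fin 4 → ℝ => (3 * (1 - q 0 ^ 2 + q 1 ^ 2))⁻¹ := by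
      funext q; simp [H0]
    rw [he]
    exact ⟨L, hg.fderiv, hg.differentiableAt, hgv⟩
  have fderivVp1 : ∀ p : Fin 4 → ℝ, p ∈ innerRegion → ∃ L : (Fin 4 → ℝ) →L[ℝ] ℝ,
      fderiv ℝ (fun q => V0p q 1) p = L ∧
      DifferentiableAt ℝ (fun q => V0p q 1) p ∧
      ∀ v, L v = -(2 * v 2) * (3 * (1 - p 0 ^ 2 + p 1 ^ 2))⁻¹
          + -(2 * p 2) * (-((3 * (1 - p 0 ^ 2 + p 1 ^ 2))⁻¹) ^ 2
              * (3 * (-(2 * p 0 * v 0) + 2 * p 1 * v 1))) := by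
    intro p hp
    obtain ⟨L, hf, hfv⟩ := hasFDerivAt_V0p1 p (hane p hp)
    have he : (fun q : Fin 4 → ℝ => V0p q 1)
        = fun q : Fin 4 → ℝ => -(2 * q 2) * (3 * (1 - q 0 ^ 2 + q 1 ^ 2))⁻¹ := by
      funext q; simp [V0p]
    rw [he]
    exact ⟨L, hf.fderiv, hf.differentiableAt, hfv⟩
  have fderivVm1 : ∀ p : Fin 4 → ℝ, p ∈ innerRegion → ∃ L : (Fin 4 → ℝ) →L[ℝ] ℝ,
      fderiv ℝ (fun q => V0m q 1) p = L ∧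
      DifferentiableAt ℝ (fun q => V0m q 1) p ∧
      ∀ v, L v = 2 * v 3 * (3 * (1 - p 0 ^ 2 + p 1 ^ 2))⁻¹
          + 2 * p 3 * (-((3 * (1 - p 0 ^ 2 + p 1 ^ 2))⁻¹) ^ 2
              * (3 * (-(2 * p 0 * v 0) + 2 * p 1 * v 1))) := by
    intro p hp
    obtain ⟨L, hf, hfv⟩ := hasFDerivAt_V0m1 p (hane p hp)
    have he : (fun q : Fin 4 → ℝ => V0m q 1)
        = fun q : Fin 4 → ℝ => 2 * q 3 * (3 * (1 - q 0 ^ 2 + q 1 ^ 2))⁻¹ := by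
      funext q; simp [V0m]
    rw [he]
    exact ⟨L, hf.fderiv, hf.differentiableAt, hfv⟩
  -- the fderiv of CM0 applied to a vector
  have fderivCM : ∀ p : Fin 4 → ℝ, ∀ w : Fin 4 → ℝ,
      fderiv ℝ CM0 p w = ![w 0, (3 * p 1 ^ 2 + 3 * (1 - p 0 ^ 2)) * w 1 - 6 * p 0 * p 1 * w 0
          + 2 * p 2 * w 2 - 2 * p 3 * w 3] := by
    intro p w
    obtain ⟨Lc, hC, hCv⟩ := hasFDerivAt_CM1 p
    have e0 : (fun q : Fin 4 → ℝ => CM0 q 0) = fun q : Fin 4 → ℝ => q 0 := by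
      funext q; simp [CM0]
    have e1 : (fun q : Fin 4 → ℝ => CM0 q 1)
        = fun q : Fin 4 → ℝ => q 1 ^ 3 + 3 * (1 - q 0 ^ 2) * q 1 + q 2 ^ 2 - q 3 ^ 2 := by
      funext q; simp [CM0]
    have hdC : fderiv ℝ CM0 p = ContinuousLinearMap.pi
        (fun i : Fin 2 => fderiv ℝ (fun q => CM0 q i) p) := by
      apply fderiv_pi
      intro i
      fin_cases i
      · rw [show (fun q : Fin 4 → ℝ => CM0 q ⟨0, by norm_num⟩) = fun q : Fin 4 → ℝ => q 0 from e0]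
        exact (hasFDerivAt_proj 0 p).differentiableAt
      · rw [show (fun q : Fin 4 → ℝ => CM0 q ⟨1, by norm_num⟩)
            = fun q : Fin 4 → ℝ => q 1 ^ 3 + 3 * (1 - q 0 ^ 2) * q 1 + q 2 ^ 2 - q 3 ^ 2 from e1]
        exact hC.differentiableAt
    rw [hdC]
    funext j
    fin_cases j
    · show fderiv ℝ (fun q => CM0 q 0) p w = _
      rw [e0, (hasFDerivAt_proj 0 p).fderiv]
      simp [ContinuousLinearMap.proj_apply]
    · show fderiv ℝ (fun q => CM0 q 1) p w = _
      rw [e1, hC.fderiv, hCv]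
      simp
  -- left inverse
  have hleft : Set.LeftInvOn ψdef φtriv innerRegion := by
    intro p hp
    obtain ⟨h1, h2⟩ := hp
    have ha : 0 < acoef (φtriv p) := by
      simp only [acoef, φtriv, Matrix.cons_val_zero]
      nlinarith
    have hb : bval (φtriv p) = p 1 ^ 3 + 3 * acoef (φtriv p) * p 1 := by
      simp only [bval, acoef, φtriv, Matrix.cons_val_zero, Matrix.cons_val_one, Matrix.head_cons,
        Matrix.cons_val_two, Matrix.tail_cons, Matrix.cons_val_three]
      ring
    have hroot := cubic_root (φtriv p) ha
    rw [hb] at hroot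
    have hmono := cubic_strictMono (acoef (φtriv p)) ha
    have hc : cval (φtriv p) = p 1 := hmono.injective (by simpa using hroot)
    funext i
    fin_cases i
    · simp [ψdef, φtriv]
    · simp [ψdef, hc]
    · simp [ψdef, φtriv]
    · simp [ψdef, φtriv]
  -- right inverse
  have hright : Set.RightInvOn ψdef φtriv innerRegion := by
    intro q hq
    obtain ⟨h1, h2⟩ := hq
    have ha : 0 < acoef q := by
      simp only [acoef]; nlinarith
    have hroot := cubic_root q ha
    funext i
    fin_cases i
    · simp [φtriv, ψdef]
    · simp only [φtriv, ψdef, Matrix.cons_val_zero, Matrix.cons_val_one, Matrix.head_cons,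
        Matrix.cons_val_two, Matrix.tail_cons, Matrix.cons_val_three]
      have hr : cval q ^ 3 + 3 * (1 - q 0 ^ 2) * cval q = bval q := by
        rw [← hroot]; simp [acoef]
      rw [show cval q ^ 3 + 3 * (1 - q 0 ^ 2) * cval q + q 2 ^ 2 - q 3 ^ 2
            = (cval q ^ 3 + 3 * (1 - q 0 ^ 2) * cval q) + q 2 ^ 2 - q 3 ^ 2 by ring, hr, bval]
      ring_nf
      simp
    · simp [φtriv, ψdef]
    · simp [φtriv, ψdef]
  have hmapsφ : Set.MapsTo φtriv innerRegion innerRegion := by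
    intro p hp
    exact ⟨by simpa [φtriv] using hp.1, by simpa [φtriv] using hp.2⟩
  have hmapsψ : Set.MapsTo ψdef innerRegion innerRegion := by
    intro q hq
    exact ⟨by simpa [ψdef] using hq.1, by simpa [ψdef] using hq.2⟩
  refine ⟨⟨hmapsφ, hleft.injOn, ?_⟩, ?_, ⟨ψdef, ?_, hleft, hright⟩, ?_, ?_, ?_, ?_, ?_, ?_, ?_⟩
  · -- SurjOn
    intro q hq
    exact ⟨ψdef q, hmapsψ hq, hright hq⟩
  · -- smoothness of φ
    apply ContDiff.contDiffOn
    rw [contDiff_pi]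
    intro i
    fin_cases i <;> (simp only [φtriv]; simp; fun_prop)
  · -- smoothness of ψ
    intro q hq
    apply ContDiffAt.contDiffWithinAt
    have ha : 0 < acoef q := by
      obtain ⟨h1, h2⟩ := hq
      simp only [acoef]; nlinarith
    rw [contDiffAt_pi]
    intro i
    fin_cases i
    · simp only [ψdef]; simp
      exact (ContinuousLinearMap.proj (R := ℝ) (φ := fun _ : Fin 4 => ℝ) 0).contDiff.contDiffAt
    · simp only [ψdef]; simpa using contDiffAt_cval q ha
    · simp only [ψdef]; simp
      exact (ContinuousLinearMap.proj (R := ℝ) (φ := fun _ : Fin 4 => ℝ) 2).contDiff.contDiffAt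
    · simp only [ψdef]; simp
      exact (ContinuousLinearMap.proj (R := ℝ) (φ := fun _ : Fin 4 => ℝ) 3).contDiff.contDiffAt
  · -- CM0 = pr ∘ φ
    intro p _
    funext i
    fin_cases i <;> simp [CM0, φtriv]
  · -- [H0, V0p] = 0
    intro p hp
    obtain ⟨Lg, eg, dg, hgv⟩ := fderivH1 p hp
    obtain ⟨Lp, ep, dp, hpv⟩ := fderivVp1 p hp
    have hdV : fderiv ℝ V0p p = ContinuousLinearMap.pi
        (fun i => fderiv ℝ (fun q => V0p q i) p) := by
      apply fderiv_pi
      intro i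
      fin_cases i
      · simp only [V0p]; simp
      · exact dp
      · simp only [V0p]; simp
      · simp only [V0p]; simp
    have hdH : fderiv ℝ H0 p = ContinuousLinearMap.pi
        (fun i => fderiv ℝ (fun q => H0 q i) p) := by
      apply fderiv_pi
      intro i
      fin_cases i
      · simp only [H0]; simp
      · exact dg
      · simp only [H0]; simp
      · simp only [H0]; simp
    rw [hdV, hdH]
    funext j
    simp only [Pi.sub_apply, ContinuousLinearMap.pi_apply, Pi.zero_apply]
    fin_cases j
    · simp only [V0p, H0]; simp
    · show fderiv ℝ (fun q => V0p q 1) p (H0 p) - fderiv ℝ (fun q => H0 q 1) p (V0p p) = 0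
      rw [ep, eg, hpv, hgv]
      simp only [H0, V0p, Matrix.cons_val_zero, Matrix.cons_val_one, Matrix.head_cons,
        Matrix.cons_val_two, Matrix.tail_cons, Matrix.cons_val_three]
      ring
    · simp only [V0p, H0]; simp
    · simp only [V0p, H0]; simp
  · -- [H0, V0m] = 0
    intro p hp
    obtain ⟨Lg, eg, dg, hgv⟩ := fderivH1 p hp
    obtain ⟨Lm, em, dm, hmv⟩ := fderivVm1 p hp
    have hdV : fderiv ℝ V0m p = ContinuousLinearMap.pi
        (fun i => fderiv ℝ (fun q => V0m q i) p) := by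
      apply fderiv_pi
      intro i
      fin_cases i
      · simp only [V0m]; simp
      · exact dm
      · simp only [V0m]; simp
      · simp only [V0m]; simp
    have hdH : fderiv ℝ H0 p = ContinuousLinearMap.pi
        (fun i => fderiv ℝ (fun q => H0 q i) p) := by
      apply fderiv_pi
      intro i
      fin_cases i
      · simp only [H0]; simp
      · exact dg
      · simp only [H0]; simp
      · simp only [H0]; simp
    rw [hdV, hdH]
    funext j
    simp only [Pi.sub_apply, ContinuousLinearMap.pi_apply, Pi.zero_apply]
    fin_cases j
    · simp only [V0m, H0]; simp
    · show fderiv ℝ (fun q => V0m q 1) p (H0 p) - fderiv ℝ (fun q => H0 q 1) p (V0m p) = 0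
      rw [em, eg, hmv, hgv]
      simp only [H0, V0m, Matrix.cons_val_zero, Matrix.cons_val_one, Matrix.head_cons,
        Matrix.cons_val_two, Matrix.tail_cons, Matrix.cons_val_three]
      ring
    · simp only [V0m, H0]; simp
    · simp only [V0m, H0]; simp
  · -- [V0p, V0m] = 0
    intro p hp
    obtain ⟨Lp, ep, dp, hpv⟩ := fderivVp1 p hp
    obtain ⟨Lm, em, dm, hmv⟩ := fderivVm1 p hp
    have hdVm : fderiv ℝ V0m p = ContinuousLinearMap.pi
        (fun i => fderiv ℝ (fun q => V0m q i) p) := by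
      apply fderiv_pi
      intro i
      fin_cases i
      · simp only [V0m]; simp
      · exact dm
      · simp only [V0m]; simp
      · simp only [V0m]; simp
    have hdVp : fderiv ℝ V0p p = ContinuousLinearMap.pi
        (fun i => fderiv ℝ (fun q => V0p q i) p) := by
      apply fderiv_pi
      intro i
      fin_cases i
      · simp only [V0p]; simp
      · exact dp
      · simp only [V0p]; simp
      · simp only [V0p]; simp
    rw [hdVm, hdVp]
    funext j
    simp only [Pi.sub_apply, ContinuousLinearMap.pi_apply, Pi.zero_apply]
    fin_cases j
    · simp only [V0m, V0p]; simp
    · show fderiv ℝ (fun q => V0m q 1) p (V0p p) - fderiv ℝ (fun q => V0p q 1) p (V0m p) = 0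
      rw [em, ep, hmv, hpv]
      simp only [V0p, V0m, Matrix.cons_val_zero, Matrix.cons_val_one, Matrix.head_cons,
        Matrix.cons_val_two, Matrix.tail_cons, Matrix.cons_val_three]
      ring
    · simp only [V0m, V0p]; simp
    · simp only [V0m, V0p]; simp
  · -- d(CM0)(H0) = (0,1)
    intro p hp
    rw [fderivCM p (H0 p)]
    have hne := hane p hp
    funext j
    fin_cases j
    · simp [H0]
    · simp only [H0, Fin.mk_one, Matrix.cons_val_zero, Matrix.cons_val_one, Matrix.head_cons,
        Matrix.cons_val_two, Matrix.tail_cons, Matrix.cons_val_three]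
      have hne2 : (1:ℝ) - p 0 ^ 2 + p 1 ^ 2 ≠ 0 := by intro h; apply hne; rw [h]; ring
      field_simp
      ring
  · -- d(CM0)(V0p) = 0
    intro p hp
    rw [fderivCM p (V0p p)]
    have hne := hane p hp
    funext j
    fin_cases j
    · simp [V0p]
    · simp only [V0p, Fin.mk_one, Matrix.cons_val_zero, Matrix.cons_val_one, Matrix.head_cons,
        Matrix.cons_val_two, Matrix.tail_cons, Matrix.cons_val_three, Pi.zero_apply]
      have hne2 : (1:ℝ) - p 0 ^ 2 + p 1 ^ 2 ≠ 0 := by intro h; apply hne; rw [h]; ring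
      field_simp
      ring
  · -- d(CM0)(V0m) = 0
    intro p hp
    rw [fderivCM p (V0m p)]
    have hne := hane p hp
    funext j
    fin_cases j
    · simp [V0m]
    · simp only [V0m, Fin.mk_one, Matrix.cons_val_zero, Matrix.cons_val_one, Matrix.head_cons,
        Matrix.cons_val_two, Matrix.tail_cons, Matrix.cons_val_three, Pi.zero_apply]
      have hne2 : (1:ℝ) - p 0 ^ 2 + p 1 ^ 2 ≠ 0 := by intro h; apply hne; rw [h]; ring
      field_simp
      ring

end
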